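/- arXiv:2512.20360 — 4 statements merged into one kernel-verified Lean document; each statement's English description precedes it below -/
import Mathlib

section
/- Let M = [[1,2],[1,3]] ∈ SL₂(ℤ). Let G be a group fitting in an extension 1 → ℤ² → G → ℤ → 1 such that the induced action of the generator of ℤ on ℤ² is given by M (so n ∈ ℤ acts by Mⁿ). Then G is not virtually nilpotent: no finite-index subgroup of G is nilpotent. -/
/-!
Pick `g ∈ H` with `p g = k > 0` and `0 ≠ v ∈ ℤ²` with `i v ∈ H`. Conjugation by `g` acts on `ℤ²`
by `A = Mᵏ`, so `⁅i v, g⁆ = i ((1 - A) v)`. For `k > 0` the matrix `A` fixes no nonzero vector: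
the traces of `Mⁿ` satisfy `tₙ₊₂ = 4 tₙ₊₁ - tₙ`, hence increase strictly from `t₀ = 2`, and
`det (1 - Mⁿ) = 2 - tₙ`. Thus the iterated commutators `⁅⋯⁅i v, g⁆, ⋯, g⁆` never vanish,
whereas in the nilpotent group `H` they lie in the lower central series, which reaches `⊥`.
-/

open Matrix
open scoped commutatorElement

namespace Matrix

variable {R : Type*} [CommRing R]

lemma mul_self_eq_trace_smul_sub_det_smul (B : Matrix (Fin 2) (Fin 2) R) :
    B * B = B.trace • B - B.det • 1 := by
  ext i j
  fin_cases i <;> fin_cases j <;>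
    simp only [Fin.isValue, Fin.zero_eta, Fin.mk_one, mul_apply, Fin.sum_univ_two, trace_fin_two,
      det_fin_two, sub_apply, smul_apply, smul_eq_mul, one_apply_eq, one_apply_ne, ne_eq,
      zero_ne_one, one_ne_zero, not_false_eq_true] <;> ring

lemma trace_pow_add_two (B : Matrix (Fin 2) (Fin 2) R) (n : ℕ) :
    (B ^ (n + 2)).trace = B.trace * (B ^ (n + 1)).trace - B.det * (B ^ n).trace := by
  rw [pow_add, sq, mul_self_eq_trace_smul_sub_det_smul, mul_sub, mul_smul_comm, mul_smul_comm,
    mul_one, ← pow_succ, trace_sub, trace_smul, trace_smul, smul_eq_mul, smul_eq_mul]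

lemma det_one_sub_fin_two (B : Matrix (Fin 2) (Fin 2) R) :
    (1 - B).det = 1 - B.trace + B.det := by
  rw [det_fin_two, det_fin_two, trace_fin_two]
  simp only [sub_apply, one_apply_eq, one_apply_ne zero_ne_one, one_apply_ne one_ne_zero]
  ring

variable [LinearOrder R] [IsStrictOrderedRing R] {B : Matrix (Fin 2) (Fin 2) R}

lemma strictMono_trace_pow (hdet : B.det = 1) (htr : 2 < B.trace) :
    StrictMono fun n : ℕ ↦ (B ^ n).trace := by
  have key : ∀ n : ℕ, 0 < (B ^ n).trace ∧ (B ^ n).trace < (B ^ (n + 1)).trace := by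
    intro n
    induction n with
    | zero => simp [trace_one, htr]
    | succ n ih =>
      refine ⟨ih.1.trans ih.2, ?_⟩
      rw [trace_pow_add_two, hdet, one_mul]
      nlinarith [ih.1, ih.2]
  exact strictMono_nat_of_lt_succ fun n ↦ (key n).2

lemma det_one_sub_pow_ne_zero (hdet : B.det = 1) (htr : 2 < B.trace) {n : ℕ} (hn : n ≠ 0) :
    (1 - B ^ n).det ≠ 0 := by
  have h2 : 2 < (B ^ n).trace := by
    simpa using strictMono_trace_pow hdet htr (Nat.pos_of_ne_zero hn)
  rw [det_one_sub_fin_two, det_pow, hdet, one_pow]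
  linarith

lemma eq_zero_of_pow_mulVec_eq_self (hdet : B.det = 1) (htr : 2 < B.trace) {n : ℕ} (hn : n ≠ 0)
    {v : Fin 2 → R} (hv : B ^ n *ᵥ v = v) : v = 0 := by
  by_contra hv0
  refine det_one_sub_pow_ne_zero hdet htr hn (exists_mulVec_eq_zero_iff.mp ⟨v, hv0, ?_⟩)
  rw [sub_mulVec, one_mulVec, hv, sub_self]

end Matrix

theorem Subgroup.exists_iterate_commutatorElement_eq_one {G : Type*} [Group G] {H : Subgroup G}
    [Group.IsNilpotent H] {a g : G} (ha : a ∈ H) (hg : g ∈ H) : ∃ n, (⁅·, g⁆)^[n] a = 1 := by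
  obtain ⟨n, hn⟩ := (H.isNilpotent_iff_lowerCentralSeries).mp ‹_›
  have mem : ∀ k, (⁅·, g⁆)^[k] a ∈ H.lowerCentralSeries k := by
    intro k
    induction k with
    | zero => exact ha
    | succ k ih =>
      rw [Function.iterate_succ_apply', lowerCentralSeries_succ]
      exact commutator_mem_commutator ih hg
  exact ⟨n, by simpa [hn] using mem n⟩

section Extension

variable {G V : Type*} [Group G] [AddCommGroup V] (i : Multiplicative V →* G) {g : G} {f : V →+ V}

theorem commutatorElement_map_ofAdd (hf : ∀ v, g * i (.ofAdd v) * g⁻¹ = i (.ofAdd (f v))) (v : V) :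
    ⁅i (.ofAdd v), g⁆ = i (.ofAdd (v - f v)) :=
  calc ⁅i (.ofAdd v), g⁆ = i (.ofAdd v) * (g * i (.ofAdd (-v)) * g⁻¹) := by
        rw [commutatorElement_def, ofAdd_neg, map_inv]; group
    _ = i (.ofAdd (v - f v)) := by rw [hf, map_neg, ← map_mul, ← ofAdd_add, sub_eq_add_neg]

theorem iterate_commutatorElement_map_ofAdd (hf : ∀ v, g * i (.ofAdd v) * g⁻¹ = i (.ofAdd (f v)))
    (n : ℕ) (v : V) : (⁅·, g⁆)^[n] (i (.ofAdd v)) = i (.ofAdd ((fun w ↦ w - f w)^[n] v)) :=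
  (Function.Semiconj.iterate_right (f := fun w ↦ i (.ofAdd w))
    (fun w ↦ (commutatorElement_map_ofAdd i hf w).symm) n v).symm

end Extension

theorem iterate_sub_self_ne_zero {V : Type*} [AddGroup V] {f : V → V} (hf : ∀ w, f w = w → w = 0)
    {v : V} (hv : v ≠ 0) (n : ℕ) : (fun w ↦ w - f w)^[n] v ≠ 0 := by
  have : Set.MapsTo (fun w ↦ w - f w) {w | w ≠ 0} {w | w ≠ 0} := fun w hw h ↦
    hw (hf w (sub_eq_zero.mp h).symm)
  exact this.iterate n hv

theorem extension_by_M_not_virtually_nilpotent_general (Mu : (Matrix (Fin 2) (Fin 2) ℤ)ˣ)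
    (hM : (Mu : Matrix (Fin 2) (Fin 2) ℤ) = !![1, 2; 1, 3])
    (G : Type*) [Group G]
    (p : G →* Multiplicative ℤ) (hp : Function.Surjective p)
    (i : Multiplicative (Fin 2 → ℤ) →* G) (hi : Function.Injective i)
    (hact : ∀ (g : G) (v : Multiplicative (Fin 2 → ℤ)),
      g * i v * g⁻¹ = i (Multiplicative.ofAdd
        (((Mu ^ (Multiplicative.toAdd (p g)) : (Matrix (Fin 2) (Fin 2) ℤ)ˣ)
            : Matrix (Fin 2) (Fin 2) ℤ).mulVec (Multiplicative.toAdd v)))) :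
    ¬ ∃ H : Subgroup G, H.FiniteIndex ∧ Group.IsNilpotent ↥H := by
  rintro ⟨H, hH, _⟩
  obtain ⟨x, hx⟩ := hp (.ofAdd 1)
  obtain ⟨k, hk, -, hxk⟩ := H.exists_pow_mem_of_index_ne_zero hH.index_ne_zero x
  obtain ⟨l, hl, -, hvl⟩ :=
    H.exists_pow_mem_of_index_ne_zero hH.index_ne_zero (i (.ofAdd (Pi.single 0 1)))
  set A := (mulVecLin ((Mu : Matrix (Fin 2) (Fin 2) ℤ) ^ k)).toAddMonoidHom
  have hA : ∀ v, A v = v → v = 0 := fun _ ↦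
    eq_zero_of_pow_mulVec_eq_self (B := (Mu : Matrix (Fin 2) (Fin 2) ℤ)) (by simp [hM, det_fin_two])
      (by simp [hM, trace_fin_two]) hk.ne'
  have hconj : ∀ v, x ^ k * i (.ofAdd v) * (x ^ k)⁻¹ = i (.ofAdd (A v)) := fun v ↦ by
    rw [hact]; simp [A, hx]
  obtain ⟨n, hn⟩ := Subgroup.exists_iterate_commutatorElement_eq_one hvl hxk
  rw [← map_pow, ← ofAdd_nsmul, iterate_commutatorElement_map_ofAdd i hconj, map_eq_one_iff _ hi,
    ofAdd_eq_one] at hn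
  exact iterate_sub_self_ne_zero hA (smul_ne_zero hl.ne' (Pi.single_ne_zero_iff.mpr one_ne_zero))
    n hn

theorem extension_by_M_not_virtually_nilpotent (Mu : (Matrix (Fin 2) (Fin 2) ℤ)ˣ)
    (hM : (Mu : Matrix (Fin 2) (Fin 2) ℤ) = !![1, 2; 1, 3])
    (G : Type*) [Group G]
    (p : G →* Multiplicative ℤ) (hp : Function.Surjective p)
    (i : Multiplicative (Fin 2 → ℤ) →* G) (hi : Function.Injective i)
    (hexact : MonoidHom.range i = MonoidHom.ker p)
    (hact : ∀ (g : G) (v : Multiplicative (Fin 2 → ℤ)),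
      g * i v * g⁻¹ = i (Multiplicative.ofAdd
        (((Mu ^ (Multiplicative.toAdd (p g)) : (Matrix (Fin 2) (Fin 2) ℤ)ˣ)
            : Matrix (Fin 2) (Fin 2) ℤ).mulVec (Multiplicative.toAdd v)))) :
    ¬ ∃ H : Subgroup G, H.FiniteIndex ∧ Group.IsNilpotent ↥H :=
  extension_by_M_not_virtually_nilpotent_general Mu hM G p hp i hi hact
end

section
/- Let X be an h-special quasi-projective variety, S a quasi-projective variety, and p : X → S a dominant morphism. Then S is h-special. -/
noncomputable section

/- We model (quasi-projective) varieties as subsets `X ⊆ ℂ^N`; entire curves in `X` are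
holomorphic maps `ℂ → ℂ^N` with range in `X`; Zariski closed subsets of `ℂ^N` are common
zero loci of multivariate polynomials. -/

/-- Zariski closed subsets of `ℂ^N`. -/
def ZClosedA {N : ℕ} (s : Set (Fin N → ℂ)) : Prop :=
  ∃ I : Set (MvPolynomial (Fin N) ℂ), s = {x | ∀ p ∈ I, MvPolynomial.eval x p = 0}

/-- The Zariski closure of a subset of `ℂ^N`. -/
def ZClosureA {N : ℕ} (s : Set (Fin N → ℂ)) : Set (Fin N → ℂ) :=
  ⋂₀ {t | ZClosedA t ∧ s ⊆ t}

/-- `f : ℂ → ℂ^N` is an entire curve in `X`. -/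
def IsEntireCurveIn {N : ℕ} (X : Set (Fin N → ℂ)) (f : ℂ → (Fin N → ℂ)) : Prop :=
  Differentiable ℂ f ∧ Set.range f ⊆ X

/-- `x ∼ y`: the points `x, y ∈ X` are connected by a chain of Zariski closures of entire
curves `f₁, …, f_{l+1}` in `X`: `x ∈ Z₁`, `Z_i ∩ Z_{i+1} ≠ ∅`, `y ∈ Z_{l+1}` where `Z_i`
is the Zariski closure of `f_i(ℂ)` in `X`. -/
def hChain {N : ℕ} (X : Set (Fin N → ℂ)) (x y : Fin N → ℂ) : Prop :=
  ∃ (l : ℕ) (f : Fin (l + 1) → ℂ → (Fin N → ℂ)),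
    (∀ i, IsEntireCurveIn X (f i)) ∧
    x ∈ ZClosureA (Set.range (f 0)) ∩ X ∧
    y ∈ ZClosureA (Set.range (f (Fin.last l))) ∩ X ∧
    ∀ i : Fin l,
      ((ZClosureA (Set.range (f i.castSucc)) ∩ X) ∩
        (ZClosureA (Set.range (f i.succ)) ∩ X)).Nonempty

/-- Zariski closed subsets of `ℂ^N × ℂ^N`. -/
def ZClosedP {N : ℕ} (s : Set ((Fin N → ℂ) × (Fin N → ℂ))) : Prop :=
  ∃ I : Set (MvPolynomial (Fin N ⊕ Fin N) ℂ),
    s = {xy | ∀ p ∈ I, MvPolynomial.eval (Sum.elim xy.1 xy.2) p = 0}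

/-- The Zariski closure in `ℂ^N × ℂ^N`. -/
def ZClosureP {N : ℕ} (s : Set ((Fin N → ℂ) × (Fin N → ℂ))) :
    Set ((Fin N → ℂ) × (Fin N → ℂ)) :=
  ⋂₀ {t | ZClosedP t ∧ s ⊆ t}

/-- `X` is h-special: the relation `R = {(x,y) ∈ X × X | x ∼ y}` is Zariski dense in
`X × X`. -/
def hSpecial {N : ℕ} (X : Set (Fin N → ℂ)) : Prop :=
  X ×ˢ X ⊆ ZClosureP {p | p.1 ∈ X ∧ p.2 ∈ X ∧ hChain X p.1 p.2}

/-! Polynomial maps are holomorphic and Zariski continuous, so `p` sends a chain of Zariski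
closures of entire curves in `X` to such a chain in `S`, and `p × p` maps `R_X` into `R_S`.
Zariski continuity of `p × p` then gives `p(X) × p(X) ⊆ closure R_S`, and since the slices
of a Zariski closed subset of `ℂ^M × ℂ^M` are Zariski closed, this extends to
`closure p(X) × closure p(X)`, which contains `S × S` by dominance. -/

open MvPolynomial

theorem MvPolynomial.eval_bind₁ {R σ τ : Type*} [CommSemiring R] (x : σ → R)
    (g : τ → MvPolynomial σ R) (q : MvPolynomial τ R) : eval x (bind₁ g q) = eval (fun j => eval x (g j)) q :=
  eval₂Hom_bind₁ _ _ _ _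

def IsPolyMap {σ τ : Type*} (F : (σ → ℂ) → (τ → ℂ)) : Prop :=
  ∃ g : τ → MvPolynomial σ ℂ, ∀ x, F x = fun j => eval x (g j)

namespace IsPolyMap

variable {σ τ υ : Type*}

theorem const (a : τ → ℂ) : IsPolyMap fun _ : σ → ℂ => a :=
  ⟨fun j => C (a j), fun _ => by simp⟩

theorem id : IsPolyMap (id : (σ → ℂ) → (σ → ℂ)) :=
  ⟨X, fun _ => by simp⟩

theorem comp_left (k : τ → σ) : IsPolyMap fun x : σ → ℂ => x ∘ k :=
  ⟨fun j => X (k j), fun _ => by ext; simp⟩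

theorem comp {G : (τ → ℂ) → (υ → ℂ)} {F : (σ → ℂ) → (τ → ℂ)}
    (hG : IsPolyMap G) (hF : IsPolyMap F) : IsPolyMap (G ∘ F) := by
  obtain ⟨h, hG⟩ := hG
  obtain ⟨g, hF⟩ := hF
  exact ⟨fun k => bind₁ g (h k), fun x => by
    ext k; simp [hG, hF, eval_bind₁]⟩

theorem sumElim {F : (σ → ℂ) → (τ → ℂ)} {G : (σ → ℂ) → (υ → ℂ)}
    (hF : IsPolyMap F) (hG : IsPolyMap G) : IsPolyMap fun x => Sum.elim (F x) (G x) := by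
  obtain ⟨g, hF⟩ := hF
  obtain ⟨h, hG⟩ := hG
  exact ⟨Sum.elim g h, fun x => by ext (j | j) <;> simp [hF, hG]⟩

theorem preimage_zeroSet {F : (σ → ℂ) → (τ → ℂ)} (hF : IsPolyMap F)
    (I : Set (MvPolynomial τ ℂ)) :
    ∃ J : Set (MvPolynomial σ ℂ),
      F ⁻¹' {y | ∀ q ∈ I, eval y q = 0} = {x | ∀ q ∈ J, eval x q = 0} := by
  obtain ⟨g, hF⟩ := hF
  refine ⟨bind₁ g '' I, ?_⟩
  ext x
  simp [hF, eval_bind₁]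

theorem differentiable [Fintype σ] {F : (σ → ℂ) → (τ → ℂ)} (hF : IsPolyMap F) :
    Differentiable ℂ F := by
  obtain ⟨g, hF⟩ := hF
  rw [funext hF]
  exact differentiable_pi.2 fun j =>
    differentiableOn_univ.1 (AnalyticOnNhd.eval_mvPolynomial (g j)).differentiableOn

end IsPolyMap

section Zariski

variable {N M : ℕ}

theorem zClosureA_subset {s t : Set (Fin N → ℂ)} (ht : ZClosedA t) (h : s ⊆ t) :
    ZClosureA s ⊆ t :=
  Set.sInter_subset_of_mem ⟨ht, h⟩

theorem zClosureP_subset {s t : Set ((Fin N → ℂ) × (Fin N → ℂ))} (ht : ZClosedP t)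
    (h : s ⊆ t) : ZClosureP s ⊆ t :=
  Set.sInter_subset_of_mem ⟨ht, h⟩

theorem ZClosedA.preimage {F : (Fin N → ℂ) → (Fin M → ℂ)} (hF : IsPolyMap F)
    {t : Set (Fin M → ℂ)} (ht : ZClosedA t) : ZClosedA (F ⁻¹' t) := by
  obtain ⟨I, rfl⟩ := ht
  exact hF.preimage_zeroSet I

theorem image_zClosureA_subset {F : (Fin N → ℂ) → (Fin M → ℂ)} (hF : IsPolyMap F)
    (s : Set (Fin N → ℂ)) : F '' ZClosureA s ⊆ ZClosureA (F '' s) := by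
  rintro _ ⟨x, hx, rfl⟩
  exact Set.mem_sInter.2 fun t ht =>
    zClosureA_subset (ht.1.preimage hF) (Set.image_subset_iff.1 ht.2) hx

theorem ZClosedP.preimage_prodMap {F : (Fin N → ℂ) → (Fin M → ℂ)} (hF : IsPolyMap F)
    {t : Set ((Fin M → ℂ) × (Fin M → ℂ))} (ht : ZClosedP t) :
    ZClosedP (Prod.map F F ⁻¹' t) := by
  obtain ⟨I, rfl⟩ := ht
  obtain ⟨J, hJ⟩ :=
    ((hF.comp (.comp_left Sum.inl)).sumElim (hF.comp (.comp_left Sum.inr))).preimage_zeroSet I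
  exact ⟨J, Set.ext fun xy => Set.ext_iff.1 hJ (Sum.elim xy.1 xy.2)⟩

theorem ZClosedP.slice_left {t : Set ((Fin N → ℂ) × (Fin N → ℂ))} (ht : ZClosedP t)
    (a : Fin N → ℂ) : ZClosedA {y | (a, y) ∈ t} := by
  obtain ⟨I, rfl⟩ := ht
  exact ((IsPolyMap.const a).sumElim IsPolyMap.id).preimage_zeroSet I

theorem ZClosedP.slice_right {t : Set ((Fin N → ℂ) × (Fin N → ℂ))} (ht : ZClosedP t)
    (b : Fin N → ℂ) : ZClosedA {x | (x, b) ∈ t} := by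
  obtain ⟨I, rfl⟩ := ht
  exact (IsPolyMap.id.sumElim (IsPolyMap.const b)).preimage_zeroSet I

theorem ZClosedP.zClosureA_prod_subset {t : Set ((Fin N → ℂ) × (Fin N → ℂ))} (ht : ZClosedP t)
    {A B : Set (Fin N → ℂ)} (h : A ×ˢ B ⊆ t) : ZClosureA A ×ˢ ZClosureA B ⊆ t := by
  rintro ⟨x, y⟩ ⟨hx, hy⟩
  have hA : A ⊆ {x | (x, y) ∈ t} := fun a ha =>
    zClosureA_subset (ht.slice_left a) (fun b hb => h ⟨ha, hb⟩) hy
  exact zClosureA_subset (ht.slice_right y) hA hx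

end Zariski

theorem hChain.map {N M : ℕ} {X : Set (Fin N → ℂ)} {S : Set (Fin M → ℂ)}
    {F : (Fin N → ℂ) → (Fin M → ℂ)} (hF : IsPolyMap F) (hmaps : Set.MapsTo F X S)
    {x y : Fin N → ℂ} (hxy : hChain X x y) : hChain S (F x) (F y) := by
  obtain ⟨l, f, hf, hx, hy, hlink⟩ := hxy
  have hmem : ∀ (g : ℂ → Fin N → ℂ) {z}, z ∈ ZClosureA (Set.range g) ∩ X →
      F z ∈ ZClosureA (Set.range (F ∘ g)) ∩ S := fun g z hz =>
    ⟨Set.range_comp F g ▸ image_zClosureA_subset hF _ ⟨z, hz.1, rfl⟩, hmaps hz.2⟩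
  refine ⟨l, fun i => F ∘ f i, fun i => ⟨?_, ?_⟩, hmem _ hx, hmem _ hy, fun i => ?_⟩
  · exact hF.differentiable.comp (hf i).1
  · rw [Set.range_comp]
    exact (Set.image_mono (hf i).2).trans hmaps.image_subset
  · obtain ⟨z, hz₁, hz₂⟩ := hlink i
    exact ⟨F z, hmem _ hz₁, hmem _ hz₂⟩

theorem hSpecial_of_dominant_image {N M : ℕ}
    (X : Set (Fin N → ℂ)) (S : Set (Fin M → ℂ))
    (p : (Fin N → ℂ) → (Fin M → ℂ))
    (halg : ∃ P : Fin M → MvPolynomial (Fin N) ℂ,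
      ∀ x, p x = fun i => MvPolynomial.eval x (P i))
    (hmaps : Set.MapsTo p X S)
    (hdom : S ⊆ ZClosureA (p '' X))
    (hX : hSpecial X) :
    hSpecial S := by
  have hp : IsPolyMap p := halg
  intro st hst
  refine Set.mem_sInter.2 fun T ⟨hT, hRT⟩ => ?_
  have himage : (p '' X) ×ˢ (p '' X) ⊆ T := by
    rw [Set.prod_image_image_eq]
    rintro _ ⟨xy, hxy, rfl⟩
    refine zClosureP_subset (hT.preimage_prodMap hp) ?_ (hX hxy)
    rintro xy ⟨hx, hy, hxy⟩
    exact hRT ⟨hmaps hx, hmaps hy, hxy.map hp hmaps⟩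
  exact hT.zClosureA_prod_subset himage (Set.prod_mono hdom hdom hst)
end
end

section
/- If a positive-dimensional quasi-projective variety X is pseudo-Brody hyperbolic, then X is not h-special. More precisely, if there is a proper Zariski-closed subset E ⊊ X such that every nonconstant holomorphic map f : ℂ → X has image in E, then the relation R = {(x,y) : x ~ y} is contained in (X × E) ∪ (E × X) ∪ Δ, where Δ is the diagonal, and hence is not Zariski dense in X × X. -/
noncomputable section

/-! ### Auxiliary lemmas -/

lemma zclosureA_subset {N : ℕ} {s C : Set (Fin N → ℂ)} (hC : ZClosedA C) (h : s ⊆ C) :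
    ZClosureA s ⊆ C := Set.sInter_subset_of_mem ⟨hC, h⟩

lemma subset_zclosureA {N : ℕ} (s : Set (Fin N → ℂ)) : s ⊆ ZClosureA s :=
  fun x hx => Set.mem_sInter.2 fun _ ht => ht.2 hx

lemma zclosedA_singleton {N : ℕ} (c : Fin N → ℂ) : ZClosedA {c} := by
  refine ⟨Set.range (fun i => MvPolynomial.X i - MvPolynomial.C (c i)), ?_⟩
  ext z
  simp only [Set.mem_singleton_iff, Set.mem_setOf_eq, Set.forall_mem_range, map_sub,
    MvPolynomial.eval_X, MvPolynomial.eval_C, sub_eq_zero]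
  exact ⟨fun h i => by rw [h], fun h => funext h⟩

lemma zclosureA_singleton {N : ℕ} (c : Fin N → ℂ) : ZClosureA {c} = {c} :=
  Set.Subset.antisymm (zclosureA_subset (zclosedA_singleton c) subset_rfl)
    (subset_zclosureA _)

lemma zclosureP_subset {N : ℕ} {s C : Set ((Fin N → ℂ) × (Fin N → ℂ))}
    (hC : ZClosedP C) (h : s ⊆ C) : ZClosureP s ⊆ C :=
  Set.sInter_subset_of_mem ⟨hC, h⟩

lemma zclosedP_diag {N : ℕ} : ZClosedP {p : (Fin N → ℂ) × (Fin N → ℂ) | p.1 = p.2} := by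
  refine ⟨Set.range (fun i : Fin N =>
    MvPolynomial.X (Sum.inl i) - MvPolynomial.X (Sum.inr i)), ?_⟩
  ext ⟨x, y⟩
  simp only [Set.mem_setOf_eq, Set.forall_mem_range, map_sub, MvPolynomial.eval_X,
    Sum.elim_inl, Sum.elim_inr, sub_eq_zero]
  exact ⟨fun h i => by rw [h], fun h => funext h⟩

lemma zclosedP_left {N : ℕ} {C : Set (Fin N → ℂ)} (hC : ZClosedA C) :
    ZClosedP {p : (Fin N → ℂ) × (Fin N → ℂ) | p.1 ∈ C} := by
  obtain ⟨I, rfl⟩ := hC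
  refine ⟨(MvPolynomial.rename Sum.inl) '' I, ?_⟩
  ext ⟨x, y⟩
  simp only [Set.mem_setOf_eq, Set.forall_mem_image, MvPolynomial.eval_rename]
  rfl

lemma zclosedP_right {N : ℕ} {C : Set (Fin N → ℂ)} (hC : ZClosedA C) :
    ZClosedP {p : (Fin N → ℂ) × (Fin N → ℂ) | p.2 ∈ C} := by
  obtain ⟨I, rfl⟩ := hC
  refine ⟨(MvPolynomial.rename Sum.inr) '' I, ?_⟩
  ext ⟨x, y⟩
  simp only [Set.mem_setOf_eq, Set.forall_mem_image, MvPolynomial.eval_rename]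
  rfl

lemma zclosedP_union {N : ℕ} {s t : Set ((Fin N → ℂ) × (Fin N → ℂ))}
    (hs : ZClosedP s) (ht : ZClosedP t) : ZClosedP (s ∪ t) := by
  obtain ⟨I, rfl⟩ := hs
  obtain ⟨J, rfl⟩ := ht
  refine ⟨Set.image2 (· * ·) I J, ?_⟩
  ext ⟨x, y⟩
  simp only [Set.mem_union, Set.mem_setOf_eq]
  constructor
  · rintro (h | h) r hr
    all_goals
      obtain ⟨p, hp, q, hq, rfl⟩ := hr
      rw [map_mul, mul_eq_zero]
    · exact Or.inl (h p hp)
    · exact Or.inr (h q hq)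
  · intro h
    by_contra hc
    push_neg at hc
    obtain ⟨⟨p, hp, hpe⟩, ⟨q, hq, hqe⟩⟩ := hc
    have := h (p * q) (Set.mem_image2_of_mem hp hq)
    rw [map_mul, mul_eq_zero] at this
    rcases this with h' | h' <;> [exact hpe h'; exact hqe h']

/-- Key step: under pseudo-Brody hyperbolicity, if `x ∉ E` lies in the trace on `X` of the
Zariski closure of an entire curve, that trace is exactly `{x}`. -/
lemma curve_trace_eq_singleton {N : ℕ} {X : Set (Fin N → ℂ)} {E : Set (Fin N → ℂ)}
    (hEcl : ∃ C, ZClosedA C ∧ E = C ∩ X)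
    (hhyp : ∀ f : ℂ → (Fin N → ℂ), IsEntireCurveIn X f →
      (¬ ∃ c, f = fun _ => c) → Set.range f ⊆ E)
    {f : ℂ → (Fin N → ℂ)} (hf : IsEntireCurveIn X f)
    {x : Fin N → ℂ} (hx : x ∈ ZClosureA (Set.range f) ∩ X) (hxE : x ∉ E) :
    ZClosureA (Set.range f) ∩ X = {x} := by
  by_cases hc : ∃ c, f = fun _ => c
  · obtain ⟨c, rfl⟩ := hc
    have hr : Set.range (fun _ : ℂ => c) = {c} := Set.range_const
    have hx' : x = c := by
      have := hx.1
      rw [hr, zclosureA_singleton] at this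
      exact this
    subst hx'
    rw [hr, zclosureA_singleton]
    exact Set.Subset.antisymm (fun z hz => hz.1)
      (by rintro z rfl; exact ⟨rfl, hx.2⟩)
  · exfalso
    obtain ⟨C, hC, rfl⟩ := hEcl
    have hrE : Set.range f ⊆ C := (hhyp f hf hc).trans Set.inter_subset_left
    exact hxE ⟨zclosureA_subset hC hrE hx.1, hx.2⟩

/-- If `x ∉ E` and `x ∼ y` then `y = x`. -/
lemma hChain_eq {N : ℕ} {X : Set (Fin N → ℂ)} {E : Set (Fin N → ℂ)}
    (hEcl : ∃ C, ZClosedA C ∧ E = C ∩ X)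
    (hhyp : ∀ f : ℂ → (Fin N → ℂ), IsEntireCurveIn X f →
      (¬ ∃ c, f = fun _ => c) → Set.range f ⊆ E)
    {x y : Fin N → ℂ} (hxE : x ∉ E) (h : hChain X x y) : y = x := by
  obtain ⟨l, f, hf, hx, hy, hchain⟩ := h
  induction l with
  | zero =>
    have h0 := curve_trace_eq_singleton hEcl hhyp (hf 0) hx hxE
    have hlast : Fin.last 0 = (0 : Fin 1) := rfl
    rw [hlast, h0] at hy
    exact hy
  | succ l ih =>
    have h0 := curve_trace_eq_singleton hEcl hhyp (hf 0) hx hxE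
    obtain ⟨z, hz1, hz2⟩ := hchain 0
    have hz1' : z ∈ ZClosureA (Set.range (f 0)) ∩ X := hz1
    rw [h0] at hz1'
    have hzx : z = x := hz1'
    subst hzx
    refine ih (fun i => f i.succ) (fun i => hf i.succ) hz2 ?_ ?_
    · show y ∈ ZClosureA (Set.range (f (Fin.last l).succ)) ∩ X
      rw [Fin.succ_last]
      exact hy
    · intro i
      show ((ZClosureA (Set.range (f i.castSucc.succ)) ∩ X) ∩
        (ZClosureA (Set.range (f i.succ.succ)) ∩ X)).Nonempty
      have := hchain i.succ
      rw [← Fin.succ_castSucc] at this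
      exact this

/- **Statement 14.** If a positive-dimensional quasi-projective variety `X` (irreducible,
with infinitely many points) is pseudo-Brody hyperbolic — there is a proper Zariski-closed
subset `E ⊊ X` containing the image of every nonconstant entire curve in `X` — then the
relation `R = {(x,y) | x ∼ y}` is contained in `(X × E) ∪ (E × X) ∪ Δ`; in particular `X`
is not h-special. -/
theorem not_hSpecial_of_pseudo_Brody_hyperbolic {N : ℕ}
    (X : Set (Fin N → ℂ))
    (hirr : X.Nonempty ∧ ∀ C₁ C₂ : Set (Fin N → ℂ),
      ZClosedA C₁ → ZClosedA C₂ → X ⊆ C₁ ∪ C₂ → X ⊆ C₁ ∨ X ⊆ C₂)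
    (hinf : X.Infinite)
    (E : Set (Fin N → ℂ)) (hEX : E ⊆ X) (hEne : E ≠ X)
    (hEcl : ∃ C, ZClosedA C ∧ E = C ∩ X)
    (hhyp : ∀ f : ℂ → (Fin N → ℂ), IsEntireCurveIn X f →
      (¬ ∃ c, f = fun _ => c) → Set.range f ⊆ E) :
    (∀ x ∈ X, ∀ y ∈ X, hChain X x y → x ∈ E ∨ y ∈ E ∨ x = y) ∧ ¬ hSpecial X := by
  obtain ⟨C, hC, hEC⟩ := hEcl
  have part1 : ∀ x ∈ X, ∀ y ∈ X, hChain X x y → x ∈ E ∨ y ∈ E ∨ x = y := by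
    intro x _ y _ hxy
    by_cases hxE : x ∈ E
    · exact Or.inl hxE
    · exact Or.inr (Or.inr (hChain_eq ⟨C, hC, hEC⟩ hhyp hxE hxy).symm)
  refine ⟨part1, ?_⟩
  intro hsp
  -- the big Zariski closed set containing the relation
  set K : Set ((Fin N → ℂ) × (Fin N → ℂ)) :=
    {p | p.1 ∈ C} ∪ ({p | p.2 ∈ C} ∪ {p | p.1 = p.2}) with hK
  have hKcl : ZClosedP K :=
    zclosedP_union (zclosedP_left hC) (zclosedP_union (zclosedP_right hC) zclosedP_diag)
  have hRK : {p : (Fin N → ℂ) × (Fin N → ℂ) | p.1 ∈ X ∧ p.2 ∈ X ∧ hChain X p.1 p.2} ⊆ K := by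
    rintro ⟨x, y⟩ ⟨hx, hy, hxy⟩
    rcases part1 x hx y hy hxy with h | h | h
    · exact Or.inl (hEC ▸ h).1
    · exact Or.inr (Or.inl (hEC ▸ h).1)
    · exact Or.inr (Or.inr h)
  -- find x ∈ X \ C
  have hEssX : ∃ x ∈ X, x ∉ E := by
    by_contra hcon
    push_neg at hcon
    exact hEne (Set.Subset.antisymm hEX hcon)
  obtain ⟨x, hxX, hxE⟩ := hEssX
  have hxC : x ∉ C := fun h => hxE (hEC ▸ ⟨h, hxX⟩)
  -- find y ∈ X \ C with y ≠ x
  have hy : ∃ y ∈ X, y ∉ C ∧ y ≠ x := by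
    by_contra hcon
    push_neg at hcon
    have hsub : X ⊆ C ∪ {x} := by
      intro z hz
      by_cases hzC : z ∈ C
      · exact Or.inl hzC
      · exact Or.inr (hcon z hz hzC)
    rcases hirr.2 C {x} hC (zclosedA_singleton x) hsub with h | h
    · exact hxC (h hxX)
    · exact hinf ((Set.finite_singleton x).subset h)
  obtain ⟨y, hyX, hyC, hyx⟩ := hy
  have : (x, y) ∈ K :=
    zclosureP_subset hKcl hRK (hsp (Set.mk_mem_prod hxX hyX))
  rcases this with h | h | h
  · exact hxC h
  · exact hyC h
  · exact hyx h.symm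
end
end

section
/- Let A be a semi-abelian variety with A = ℂⁿ/Γ for a lattice-like discrete subgroup Γ ⊂ ℂⁿ, let B = V/(V ∩ Γ) be a semi-abelian subvariety (V ⊆ ℂⁿ a complex subspace), and let C → B be a finite étale (isogeny-type) cover of B. Then there exists an isogeny A' → A (given by a finite-index subgroup Γ' ⊆ Γ with Γ' ∩ V = Im[π₁(C) → π₁(A)]) such that the fiber product C ×_A A' is a disjoint union of copies of C and the natural morphism C → A' is injective. -/
/- **Statement 16.** Let `A = ℂⁿ/Γ` be a semi-abelian variety (`Γ` a finitely generated
discrete subgroup with `π₁(A) ≅ Γ`), `B = V/(V ∩ Γ)` a semi-abelian subvariety (`V ⊆ ℂⁿ`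
a complex subspace), and `C → B` a finite étale cover, corresponding to a finite-index
subgroup `Λ ≤ Γ ∩ V` (so `C = V/Λ`). Then there is an isogeny `A' → A`, given by a
finite-index subgroup `Γ' ≤ Γ` with `Γ' ∩ V = Λ`, such that the natural morphism
`C → A' = ℂⁿ/Γ'` is injective and the fiber product `C ×_A A'` is a disjoint union of
copies of `C`. -/
theorem semiabelian_isogeny_splitting {n : ℕ}
    (Γ : AddSubgroup (Fin n → ℂ)) (hΓfg : Γ.FG)
    (V : Submodule ℂ (Fin n → ℂ))
    (Λ : AddSubgroup (Fin n → ℂ))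
    (hΛle : Λ ≤ Γ ⊓ V.toAddSubgroup)
    (hΛfin : (Λ.addSubgroupOf (Γ ⊓ V.toAddSubgroup)).index ≠ 0) :
    ∃ Γ' : AddSubgroup (Fin n → ℂ),
      -- `A' = ℂⁿ/Γ' → A = ℂⁿ/Γ` is an isogeny:
      Γ' ≤ Γ ∧ (Γ'.addSubgroupOf Γ).index ≠ 0 ∧
      -- `Im[π₁(C) → π₁(A')] = Γ' ∩ V = Λ = Im[π₁(C) → π₁(A)]`:
      Γ' ⊓ V.toAddSubgroup = Λ ∧
      -- the natural morphism `C = V/Λ → A' = ℂⁿ/Γ'` is injective: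
      (∃ h : Λ.addSubgroupOf V.toAddSubgroup ≤ Γ'.comap V.toAddSubgroup.subtype,
        Function.Injective
          (QuotientAddGroup.map (Λ.addSubgroupOf V.toAddSubgroup) Γ'
            V.toAddSubgroup.subtype h)) ∧
      -- the fiber product `C ×_A A'` is a disjoint union of copies of `C`:
      (∃ (hCA : Λ.addSubgroupOf V.toAddSubgroup ≤ Γ.comap V.toAddSubgroup.subtype)
          (hA'A : Γ' ≤ Γ.comap (AddMonoidHom.id (Fin n → ℂ))) (ι : Type),
        Nonempty
          ({ ca : (↥V.toAddSubgroup ⧸ Λ.addSubgroupOf V.toAddSubgroup) ×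
              ((Fin n → ℂ) ⧸ Γ') //
              QuotientAddGroup.map (Λ.addSubgroupOf V.toAddSubgroup) Γ
                  V.toAddSubgroup.subtype hCA ca.1 =
                QuotientAddGroup.map Γ' Γ (AddMonoidHom.id (Fin n → ℂ)) hA'A ca.2 } ≃
            ι × (↥V.toAddSubgroup ⧸ Λ.addSubgroupOf V.toAddSubgroup))) := by
  classical
  set m := (Λ.addSubgroupOf (Γ ⊓ V.toAddSubgroup)).index with hmdef
  have hm : m ≠ 0 := hΛfin
  have hsm : ∀ x ∈ Γ ⊓ V.toAddSubgroup, m • x ∈ Λ := by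
    intro x hx
    have := AddSubgroup.nsmul_index_mem (Λ.addSubgroupOf (Γ ⊓ V.toAddSubgroup)) ⟨x, hx⟩
    simpa [AddSubgroup.mem_addSubgroupOf] using this
  -- multiplication-by-m map
  set μ : (Fin n → ℂ) →+ (Fin n → ℂ) :=
    AddMonoidHom.mk' (fun x => m • x) (fun a b => smul_add m a b) with hμdef
  set Γ' : AddSubgroup (Fin n → ℂ) := Λ ⊔ Γ.map μ with hΓ'def
  have hΛΓ' : Λ ≤ Γ' := le_sup_left
  have hmΓΓ' : Γ.map μ ≤ Γ' := le_sup_right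
  -- Γ' ≤ Γ
  have hΓ'Γ : Γ' ≤ Γ := by
    apply sup_le (hΛle.trans inf_le_left)
    rintro x ⟨γ, hγ, rfl⟩
    exact AddSubgroup.nsmul_mem Γ hγ m
  -- Γ' ⊓ V = Λ
  have hinf : Γ' ⊓ V.toAddSubgroup = Λ := by
    apply le_antisymm
    · rintro x ⟨hx1, hx2⟩
      rcases (AddSubgroup.mem_sup).1 hx1 with ⟨a, ha, b, hb, rfl⟩
      rcases hb with ⟨γ, hγ, rfl⟩
      have haV : a ∈ V := (hΛle ha).2
      have hbV : μ γ ∈ V := by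
        have : (a + μ γ) - a ∈ V := V.sub_mem hx2 haV
        simpa using this
      have hγV : γ ∈ V := by
        have hmC : (m : ℂ) ≠ 0 := Nat.cast_ne_zero.mpr hm
        have : μ γ = (m : ℂ) • γ := by
          simp [hμdef, Nat.cast_smul_eq_nsmul]
        have hγeq : γ = (m : ℂ)⁻¹ • (μ γ) := by
          rw [this, smul_smul, inv_mul_cancel₀ hmC, one_smul]
        rw [hγeq]
        exact V.smul_mem _ hbV
      have : μ γ ∈ Λ := hsm γ ⟨hγ, hγV⟩
      exact Λ.add_mem ha this
    · exact le_inf hΛΓ' (fun x hx => (hΛle hx).2)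
  -- finite index
  have hfin : (Γ'.addSubgroupOf Γ).index ≠ 0 := by
    haveI : AddGroup.FG ↥Γ := (AddGroup.fg_iff_addSubgroup_fg Γ).2 hΓfg
    haveI : AddGroup.FG (↥Γ ⧸ Γ'.addSubgroupOf Γ) :=
      AddGroup.fg_of_surjective (QuotientAddGroup.mk'_surjective _)
    have htor : AddMonoid.IsTorsion (↥Γ ⧸ Γ'.addSubgroupOf Γ) := by
      intro q
      refine isOfFinAddOrder_iff_nsmul_eq_zero.2 ⟨m, Nat.pos_of_ne_zero hm, ?_⟩
      induction q using QuotientAddGroup.induction_on with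
      | H g =>
        rw [← QuotientAddGroup.mk_nsmul, QuotientAddGroup.eq_zero_iff]
        show ((m • g : ↥Γ) : Fin n → ℂ) ∈ Γ'
        exact hmΓΓ' ⟨(g : Fin n → ℂ), g.2, by simp [hμdef]⟩
    haveI : Finite (↥Γ ⧸ Γ'.addSubgroupOf Γ) := AddCommGroup.finite_of_fg_torsion _ htor
    exact AddSubgroup.index_ne_zero_of_finite
  refine ⟨Γ', hΓ'Γ, hfin, hinf, ?_, ?_⟩
  · -- injectivity of C → A'
    have h : Λ.addSubgroupOf V.toAddSubgroup ≤ Γ'.comap V.toAddSubgroup.subtype :=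
      fun v hv => hΛΓ' hv
    refine ⟨h, ?_⟩
    rw [injective_iff_map_eq_zero]
    intro c hc
    induction c using QuotientAddGroup.induction_on with
    | H v =>
      rw [QuotientAddGroup.map_mk, QuotientAddGroup.eq_zero_iff] at hc
      rw [QuotientAddGroup.eq_zero_iff]
      have : (v : Fin n → ℂ) ∈ Γ' ⊓ V.toAddSubgroup := ⟨hc, v.2⟩
      rw [hinf] at this
      exact this
  · -- fiber product
    have hCA : Λ.addSubgroupOf V.toAddSubgroup ≤ Γ.comap V.toAddSubgroup.subtype :=
      fun v hv => (hΛle hv).1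
    have hA'A : Γ' ≤ Γ.comap (AddMonoidHom.id (Fin n → ℂ)) := hΓ'Γ
    have hj : Λ.addSubgroupOf V.toAddSubgroup ≤ Γ'.comap V.toAddSubgroup.subtype :=
      fun v hv => hΛΓ' hv
    set f := QuotientAddGroup.map (Λ.addSubgroupOf V.toAddSubgroup) Γ
      V.toAddSubgroup.subtype hCA with hfdef
    set g := QuotientAddGroup.map Γ' Γ (AddMonoidHom.id (Fin n → ℂ)) hA'A with hgdef
    set j := QuotientAddGroup.map (Λ.addSubgroupOf V.toAddSubgroup) Γ'
      V.toAddSubgroup.subtype hj with hjdef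
    have hcomp : ∀ c, g (j c) = f c := by
      intro c
      induction c using QuotientAddGroup.induction_on with
      | H v => simp [hfdef, hgdef, hjdef, QuotientAddGroup.map_mk]
    refine ⟨hCA, hA'A, ↥g.ker, ⟨?_⟩⟩
    refine
      { toFun := fun s => (⟨s.1.2 - j s.1.1, ?_⟩, s.1.1)
        invFun := fun p => ⟨(p.2, (p.1 : (Fin n → ℂ) ⧸ Γ') + j p.2), ?_⟩
        left_inv := ?_
        right_inv := ?_ }
    · rw [AddMonoidHom.mem_ker, map_sub, hcomp, ← s.2, sub_self]
    · show f p.2 = g ((p.1 : (Fin n → ℂ) ⧸ Γ') + j p.2)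
      rw [map_add, hcomp, AddMonoidHom.mem_ker.1 p.1.2, zero_add]
    · rintro ⟨⟨c, a⟩, hs⟩
      simp
    · rintro ⟨⟨k, hk⟩, c⟩
      simp
end
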